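/- Let λ be an ordinal and ⟨w_i : i < γ⟩ a sequence of subsets of λ such that there is no countably infinite u ⊆ λ with u ∩ w_i finite for every i < γ. For an infinite v ⊆ λ let i(v) be the least i with v ∩ w_i infinite, and define cl(u) = u ∪ {0} ∪ ⋃{ w_{i(v)} : v a countably infinite subset of u }. Then there is no sequence ⟨u_n : n < ω⟩ of subsets of λ with u_{n+1} ⊆ u_n and u_n ⊄ cl(u_{n+1}) for all n. -/

import Mathlib

/-!
Pick `a n ∈ u n \ cl (u (n+1))`. The tails `{a m | m > n}` are countably infinite subsets of
`u (n+1)` that differ from each other by finite sets, so they all have the same index `i`; then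
`w i` meets the first tail in some `a m`, and `a m ∈ w (idx (tail m)) ⊆ cl (u (m+1))`.
-/

universe u

/-- `idx γ w v` : the least `i < γ` such that `v ∩ w i` is infinite. -/
noncomputable def idx (γ : Ordinal.{u}) (w : Ordinal.{u} → Set Ordinal.{u})
    (v : Set Ordinal.{u}) : Ordinal.{u} :=
  sInf {i | i < γ ∧ (v ∩ w i).Infinite}

/-- `cl γ w u = u ∪ {0} ∪ ⋃ { w (idx v) : v a countably infinite subset of u }`. -/
noncomputable def cl (γ : Ordinal.{u}) (w : Ordinal.{u} → Set Ordinal.{u})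
    (u : Set Ordinal.{u}) : Set Ordinal.{u} :=
  u ∪ {0} ∪ ⋃ v ∈ {v : Set Ordinal.{u} | v ⊆ u ∧ v.Countable ∧ v.Infinite}, w (idx γ w v)

section Closure

variable {γ : Ordinal.{u}} {w : Ordinal.{u} → Set Ordinal.{u}} {u v v' : Set Ordinal.{u}}

theorem idx_lt_and_inter_infinite (h : ∃ i < γ, (v ∩ w i).Infinite) :
    idx γ w v < γ ∧ (v ∩ w (idx γ w v)).Infinite :=
  csInf_mem (s := {i | i < γ ∧ (v ∩ w i).Infinite}) h

theorem idx_eq_of_subset_of_diff_finite (hsub : v ⊆ v') (hfin : (v' \ v).Finite) :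
    idx γ w v = idx γ w v' := by
  have hinf : ∀ i, (v ∩ w i).Infinite ↔ (v' ∩ w i).Infinite := by
    refine fun i => ⟨fun h => h.mono (Set.inter_subset_inter_left _ hsub), fun h => ?_⟩
    refine (h.sdiff hfin).mono ?_
    rintro x ⟨⟨hxv', hxw⟩, hxv⟩
    exact ⟨by_contra fun hx => hxv ⟨hxv', hx⟩, hxw⟩
  simp only [idx, hinf]

theorem self_subset_cl : u ⊆ cl γ w u := fun _ hx => Or.inl (Or.inl hx)

theorem w_idx_subset_cl (hvu : v ⊆ u) (hc : v.Countable) (hi : v.Infinite) :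
    w (idx γ w v) ⊆ cl γ w u := fun _ hx => Or.inr (Set.mem_biUnion ⟨hvu, hc, hi⟩ hx)

theorem exists_mem_w_idx_image_Ioi (a : ℕ → Ordinal.{u})
    (h : ∃ i < γ, (a '' Set.Ioi 0 ∩ w i).Infinite) :
    ∃ m, a m ∈ w (idx γ w (a '' Set.Ioi m)) := by
  obtain ⟨-, hinf⟩ := idx_lt_and_inter_infinite h
  obtain ⟨-, ⟨m, -, rfl⟩, ham⟩ := hinf.nonempty
  refine ⟨m, ?_⟩
  have hsub : a '' Set.Ioi m ⊆ a '' Set.Ioi 0 := Set.image_mono (Set.Ioi_subset_Ioi m.zero_le)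
  have hfin : (a '' Set.Ioi 0 \ a '' Set.Ioi m).Finite :=
    ((Set.finite_Iic m).image a).subset fun _ ⟨⟨k, _, hk⟩, hnot⟩ =>
      ⟨k, Set.mem_Iic.2 (not_lt.1 fun hmk => hnot ⟨k, hmk, hk⟩), hk⟩
  rwa [idx_eq_of_subset_of_diff_finite hsub hfin]

end Closure

theorem stmt_3_general (lam γ : Ordinal.{u}) (w : Ordinal.{u} → Set Ordinal.{u})
    (hmeet : ¬ ∃ v : Set Ordinal.{u}, v ⊆ Set.Iio lam ∧ v.Countable ∧ v.Infinite ∧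
      ∀ i < γ, (v ∩ w i).Finite) :
    ¬ ∃ u : ℕ → Set Ordinal.{u},
      (∀ n, u n ⊆ Set.Iio lam) ∧
      (∀ n, u (n + 1) ⊆ u n) ∧
      (∀ n, ¬ u n ⊆ cl γ w (u (n + 1))) := by
  rintro ⟨u, hlam, hmono, hcl⟩
  choose a ha hacl using fun n => Set.not_subset.1 (hcl n)
  have hanti : Antitone u := antitone_nat_of_succ_le hmono
  have htail : ∀ n, a '' Set.Ioi n ⊆ u (n + 1) := by
    rintro n _ ⟨m, hm, rfl⟩
    exact hanti hm (ha m)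
  have hinj : Function.Injective a := Function.Injective.of_lt_imp_ne fun m n hmn heq =>
    hacl m (self_subset_cl (heq ▸ htail m ⟨n, hmn, rfl⟩))
  have hcount : ∀ n, (a '' Set.Ioi n).Countable := fun n => (Set.to_countable _).image a
  have hinfinite : ∀ n, (a '' Set.Ioi n).Infinite := fun n =>
    (Set.Ioi_infinite n).image hinj.injOn
  push Not at hmeet
  obtain ⟨m, hm⟩ := exists_mem_w_idx_image_Ioi a <|
    hmeet _ ((htail 0).trans (hlam 1)) (hcount 0) (hinfinite 0)
  exact hacl m (w_idx_subset_cl (htail m) (hcount m) (hinfinite m) hm)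

/-- If `⟨w i : i < γ⟩` is a family of subsets of `λ` such that there is no countably
infinite `u ⊆ λ` with `u ∩ w i` finite for every `i < γ`, then there is no decreasing
sequence `⟨u n : n < ω⟩` of subsets of `λ` with `u n ⊄ cl (u (n+1))` for all `n`. -/
theorem stmt_3 (lam γ : Ordinal.{u}) (w : Ordinal.{u} → Set Ordinal.{u})
    (hw : ∀ i < γ, w i ⊆ Set.Iio lam)
    (hmeet : ¬ ∃ v : Set Ordinal.{u}, v ⊆ Set.Iio lam ∧ v.Countable ∧ v.Infinite ∧
      ∀ i < γ, (v ∩ w i).Finite) :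
    ¬ ∃ u : ℕ → Set Ordinal.{u},
      (∀ n, u n ⊆ Set.Iio lam) ∧
      (∀ n, u (n + 1) ⊆ u n) ∧
      (∀ n, ¬ u n ⊆ cl γ w (u (n + 1))) :=
  stmt_3_general lam γ w hmeet
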